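/- If G is a connected graph with res(G) = 3 and v is a vertex of degree 4, then the subgraph induced by N(v) is a path P_4 on four vertices. -/

import Mathlib

/-
If every 3-set resolves `G`, two distinct vertices never have three common neighbours, so no
neighbour of `v` is adjacent to three others (it would not be separated from `v`). Inside `N(v)`
distances are `1` or `2` according to adjacency, so for distinct `x, y ∈ N(v)` at most one
further vertex of `N(v)` fails to separate them by adjacency: two such vertices `z, w` would
make `{v, z, w}` non-resolving. On four vertices these two conditions force a vertex of degree
one, and from that leaf the graph unfolds as the path `P₄`.
-/

open SimpleGraph Finset

variable {V : Type*}

/-- A finite set `W` of vertices resolves `G` if distinct vertices have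
distinct vectors of distances to the vertices of `W`. -/
def SimpleGraph.IsResolvingSet (G : SimpleGraph V) (W : Finset V) : Prop :=
  ∀ u v : V, (∀ w ∈ W, G.dist u w = G.dist v w) → u = v

/-- The metric dimension of `G`: the minimum cardinality of a resolving set. -/
noncomputable def SimpleGraph.metricDim (G : SimpleGraph V) [Fintype V] : ℕ :=
  sInf {k | ∃ W : Finset V, W.card = k ∧ G.IsResolvingSet W}

/-- `G` is randomly `k`-dimensional: `G` is connected, has metric dimension `k`,
and every `k`-subset of vertices is a (minimum) resolving set, i.e. a basis. -/
def SimpleGraph.RandomlyKDim (G : SimpleGraph V) [Fintype V] (k : ℕ) : Prop :=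
  G.Connected ∧ G.metricDim = k ∧ ∀ W : Finset V, W.card = k → G.IsResolvingSet W

/-- The resolving number of `G`: the minimum `k` such that every `k`-subset of
vertices is a resolving set. -/
noncomputable def SimpleGraph.resolvingNumber (G : SimpleGraph V) [Fintype V] : ℕ :=
  sInf {k | ∀ W : Finset V, W.card = k → G.IsResolvingSet W}

namespace Fintype

lemma exists_forall_eq_or_eq_or_eq_or_eq {W : Type*} [Fintype W] (hW : card W = 4) {a b c : W}
    (hab : a ≠ b) (hac : a ≠ c) (hbc : b ≠ c) :
    ∃ d, d ≠ a ∧ d ≠ b ∧ d ≠ c ∧ ∀ x, x = a ∨ x = b ∨ x = c ∨ x = d := by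
  classical
  have hcard : (Finset.univ \ {a, b, c}).card = 1 := by
    rw [Finset.card_sdiff_of_subset (Finset.subset_univ _), Finset.card_univ, hW,
      Finset.card_eq_three.mpr ⟨a, b, c, hab, hac, hbc, rfl⟩]
  obtain ⟨d, hd⟩ := Finset.card_eq_one.mp hcard
  have hmem : ∀ x, (x ≠ a ∧ x ≠ b ∧ x ≠ c) ↔ x = d := fun x => by
    simpa using Finset.ext_iff.mp hd x
  obtain ⟨hda, hdb, hdc⟩ := (hmem d).mpr rfl
  refine ⟨d, hda, hdb, hdc, fun x => ?_⟩
  by_contra! hx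
  exact hx.2.2.2 ((hmem x).mp ⟨hx.1, hx.2.1, hx.2.2.1⟩)

end Fintype

namespace SimpleGraph

section FourVertices

variable {W : Type*} (H : SimpleGraph W)

lemma nonempty_iso_pathGraph_four_of_path {a b c d : W}
    (hcover : ∀ x, x = a ∨ x = b ∨ x = c ∨ x = d)
    (hab : H.Adj a b) (hbc : H.Adj b c) (hcd : H.Adj c d)
    (hac : ¬H.Adj a c) (had : ¬H.Adj a d) (hbd : ¬H.Adj b d) :
    Nonempty (H ≃g pathGraph 4) := by
  have hac' : a ≠ c := by rintro rfl; exact had hcd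
  have had' : a ≠ d := by rintro rfl; exact hac hcd.symm
  have hbd' : b ≠ d := by rintro rfl; exact had hab
  have hinj : Function.Injective ![a, b, c, d] := by
    intro i j hij
    fin_cases i <;> fin_cases j <;> simp_all [hab.ne, hbc.ne, hcd.ne, eq_comm]
  have hsurj : Function.Surjective ![a, b, c, d] := by
    intro x
    rcases hcover x with rfl | rfl | rfl | rfl
    exacts [⟨0, rfl⟩, ⟨1, rfl⟩, ⟨2, rfl⟩, ⟨3, rfl⟩]
  refine ⟨(RelIso.mk (Equiv.ofBijective _ ⟨hinj, hsurj⟩) fun {i j} => ?_).symm⟩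
  change H.Adj (![a, b, c, d] i) (![a, b, c, d] j) ↔ (pathGraph 4).Adj i j
  fin_cases i <;> fin_cases j <;> simp [pathGraph_adj, H.adj_comm, *]

variable [Fintype W]

lemma nonempty_iso_pathGraph_four_of_unique_neighbor (hW : Fintype.card W = 4)
    (hclaw : ∀ x p q r, H.Adj x p → H.Adj x q → H.Adj x r → p = q ∨ p = r ∨ q = r)
    (hsep : ∀ x y z w, x ≠ y → z ≠ x → z ≠ y → w ≠ x → w ≠ y →
      (H.Adj z x ↔ H.Adj z y) → (H.Adj w x ↔ H.Adj w y) → z = w)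
    {a b : W} (hab : H.Adj a b) (huniq : ∀ y, H.Adj a y → y = b) :
    Nonempty (H ≃g pathGraph 4) := by
  have hna : ∀ y, y ≠ b → ¬H.Adj y a := fun y hy h => hy (huniq y h.symm)
  obtain ⟨c, hca, hcb⟩ := ENat.exists_ne_ne_of_three_le (by norm_num [hW]) a b
  obtain ⟨d, hda, hdb, hdc, hcover⟩ :=
    Fintype.exists_forall_eq_or_eq_or_eq_or_eq hW hab.ne hca.symm hcb.symm
  wlog hbc : H.Adj b c generalizing c d
  · have hbd : H.Adj b d := by
      by_contra hbd
      exact hdc (hsep a b d c hab.ne hda hdb hca hcb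
        (iff_of_false (hna d hdb) (mt Adj.symm hbd)) (iff_of_false (hna c hcb) (mt Adj.symm hbc)))
    exact this d hda hdb c hca hcb hdc.symm (fun x => by have := hcover x; tauto) hbd
  have hbd : ¬H.Adj b d := fun hbd => by
    rcases hclaw b a c d hab.symm hbc hbd with h | h | h
    exacts [hca h.symm, hda h.symm, hdc h.symm]
  have hcd : H.Adj c d := by
    by_contra hcd
    exact hdb (hsep a c b d hca.symm hab.ne.symm hbc.ne hda hdc
      (iff_of_true hab.symm hbc) (iff_of_false (hna d hdb) (mt Adj.symm hcd))).symm
  exact nonempty_iso_pathGraph_four_of_path H hcover hab hbc hcd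
    (fun h => hna c hcb h.symm) (fun h => hna d hdb h.symm) hbd

lemma exists_adj_forall_adj_eq (hW : Fintype.card W = 4)
    (hclaw : ∀ x p q r, H.Adj x p → H.Adj x q → H.Adj x r → p = q ∨ p = r ∨ q = r)
    (hsep : ∀ x y z w, x ≠ y → z ≠ x → z ≠ y → w ≠ x → w ≠ y →
      (H.Adj z x ↔ H.Adj z y) → (H.Adj w x ↔ H.Adj w y) → z = w) :
    ∃ a b, H.Adj a b ∧ ∀ y, H.Adj a y → y = b := by
  obtain ⟨x, y, hxy⟩ : ∃ x y, H.Adj x y := by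
    obtain ⟨p, q, hpq⟩ := Fintype.exists_pair_of_one_lt_card (by omega : 1 < Fintype.card W)
    obtain ⟨r, hrp, hrq⟩ := ENat.exists_ne_ne_of_three_le (by norm_num [hW]) p q
    obtain ⟨s, hsp, hsq, hsr, -⟩ :=
      Fintype.exists_forall_eq_or_eq_or_eq_or_eq hW hpq hrp.symm hrq.symm
    by_contra! h
    exact hsr (hsep p q s r hpq hsp hsq hrp hrq (iff_of_false (h _ _) (h _ _))
      (iff_of_false (h _ _) (h _ _)))
  -- If `x` has a second neighbour `z`, the fourth vertex `w` separates `y` from `z`, say `w ∼ y`;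
  -- then `z` is a leaf, or `y` has the three neighbours `x, w, z`.
  by_contra! hnone
  obtain ⟨z, hxz, hzy⟩ := hnone x y hxy
  obtain ⟨w, hwx, hwy, hwz, hcover⟩ :=
    Fintype.exists_forall_eq_or_eq_or_eq_or_eq hW hxy.ne hxz.ne hzy.symm
  have hsepw : ¬(H.Adj w y ↔ H.Adj w z) := fun h => hwx <|
    hsep y z w x hzy.symm hwy hwz hxy.ne hxz.ne h (iff_of_true hxy hxz)
  wlog hwy' : H.Adj w y generalizing y z
  · exact this z hxz y hxy hzy.symm hwz hwy (fun v => by have := hcover v; tauto)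
      (fun h => hsepw h.symm) (by tauto)
  obtain ⟨t, hzt, htx⟩ := hnone z x hxz.symm
  have hty : t = y := by
    rcases hcover t with rfl | rfl | rfl | rfl
    · exact absurd rfl htx
    · rfl
    · exact absurd hzt H.irrefl
    · exact absurd ⟨fun _ => hzt.symm, fun _ => hwy'⟩ hsepw
  subst hty
  rcases hclaw t x w z hxy.symm hwy'.symm hzt.symm with h | h | h
  exacts [hwx h.symm, hxz.ne h, hwz h]

theorem nonempty_iso_pathGraph_four (hW : Fintype.card W = 4)
    (hclaw : ∀ x p q r, H.Adj x p → H.Adj x q → H.Adj x r → p = q ∨ p = r ∨ q = r)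
    (hsep : ∀ x y z w, x ≠ y → z ≠ x → z ≠ y → w ≠ x → w ≠ y →
      (H.Adj z x ↔ H.Adj z y) → (H.Adj w x ↔ H.Adj w y) → z = w) :
    Nonempty (H ≃g pathGraph 4) :=
  have ⟨_, _, hab, huniq⟩ := exists_adj_forall_adj_eq H hW hclaw hsep
  nonempty_iso_pathGraph_four_of_unique_neighbor H hW hclaw hsep hab huniq

end FourVertices

section Resolving

variable {G : SimpleGraph V}

lemma isResolvingSet_of_card_eq_resolvingNumber [Fintype V] (h : G.resolvingNumber ≠ 0)
    {W : Finset V} (hW : W.card = G.resolvingNumber) : G.IsResolvingSet W := by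
  have hne : {k | ∀ W : Finset V, W.card = k → G.IsResolvingSet W}.Nonempty := by
    by_contra hempty
    rw [Set.not_nonempty_iff_eq_empty] at hempty
    exact h (by rw [resolvingNumber, hempty, Nat.sInf_empty])
  exact Nat.sInf_mem hne W hW

lemma dist_eq_two_of_adj_of_adj {v s t : V} (hs : G.Adj v s) (ht : G.Adj v t) (hst : s ≠ t)
    (hn : ¬G.Adj s t) : G.dist s t = 2 := by
  have h := (hs.symm.reachable.trans ht.reachable).coe_dist_eq_edist
  rw [edist_eq_two_iff.mpr ⟨hst, hn, v, G.mem_commonNeighbors.mpr ⟨hs.symm, ht.symm⟩⟩] at h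
  exact_mod_cast h

lemma dist_eq_dist_of_adj_iff_adj {v x y z : V} (hx : G.Adj v x) (hy : G.Adj v y)
    (hz : G.Adj v z) (hzx : z ≠ x) (hzy : z ≠ y) (h : G.Adj z x ↔ G.Adj z y) :
    G.dist z x = G.dist z y := by
  by_cases hadj : G.Adj z x
  · rw [dist_eq_one_iff_adj.mpr hadj, dist_eq_one_iff_adj.mpr (h.mp hadj)]
  · rw [dist_eq_two_of_adj_of_adj hz hx hzx hadj,
      dist_eq_two_of_adj_of_adj hz hy hzy (mt h.mpr hadj)]

lemma eq_of_dist_eq_of_card_three (h3 : ∀ W : Finset V, W.card = 3 → G.IsResolvingSet W)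
    {x y z u w : V} (hxy : x ≠ y) (hxz : x ≠ z) (hyz : y ≠ z) (hx : G.dist u x = G.dist w x)
    (hy : G.dist u y = G.dist w y) (hz : G.dist u z = G.dist w z) : u = w := by
  classical
  exact h3 {x, y, z} (card_eq_three.mpr ⟨x, y, z, hxy, hxz, hyz, rfl⟩) u w
    (by simp [hx, hy, hz])

lemma eq_of_adj_of_adj_of_adj (h3 : ∀ W : Finset V, W.card = 3 → G.IsResolvingSet W)
    {u w p q r : V} (hpq : p ≠ q) (hpr : p ≠ r) (hqr : q ≠ r)
    (hup : G.Adj u p) (huq : G.Adj u q) (hur : G.Adj u r)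
    (hwp : G.Adj w p) (hwq : G.Adj w q) (hwr : G.Adj w r) : u = w := by
  refine eq_of_dist_eq_of_card_three h3 hpq hpr hqr ?_ ?_ ?_ <;>
    simp only [dist_eq_one_iff_adj.mpr, *]

lemma eq_of_adj_iff_adj_of_adj_iff_adj (h3 : ∀ W : Finset V, W.card = 3 → G.IsResolvingSet W)
    {v x y z w : V} (hx : G.Adj v x) (hy : G.Adj v y) (hz : G.Adj v z) (hw : G.Adj v w)
    (hxy : x ≠ y) (hzx : z ≠ x) (hzy : z ≠ y) (hwx : w ≠ x) (hwy : w ≠ y)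
    (hzxy : G.Adj z x ↔ G.Adj z y) (hwxy : G.Adj w x ↔ G.Adj w y) : z = w := by
  by_contra hzw
  refine hxy (eq_of_dist_eq_of_card_three h3 hz.ne hw.ne hzw ?_ ?_ ?_)
  · rw [dist_comm, dist_eq_one_iff_adj.mpr hx, dist_comm, dist_eq_one_iff_adj.mpr hy]
  · rw [dist_comm, dist_eq_dist_of_adj_iff_adj hx hy hz hzx hzy hzxy, dist_comm]
  · rw [dist_comm, dist_eq_dist_of_adj_iff_adj hx hy hw hwx hwy hwxy, dist_comm]

end Resolving

end SimpleGraph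

theorem stmt17_general [Fintype V] (G : SimpleGraph V) [DecidableRel G.Adj]
    (hres : G.resolvingNumber = 3) (v : V)
    (hv : G.degree v = 4) :
    Nonempty ((G.induce (G.neighborSet v)) ≃g pathGraph 4) := by
  have h3 (W : Finset V) (hW : W.card = 3) : G.IsResolvingSet W :=
    isResolvingSet_of_card_eq_resolvingNumber (by omega) (hW.trans hres.symm)
  refine nonempty_iso_pathGraph_four _ (by rw [card_neighborSet_eq_degree, hv]) ?_ ?_
  · intro x p q r hp hq hr
    by_contra! h
    exact G.ne_of_adj x.2 <| eq_of_adj_of_adj_of_adj h3 (Subtype.coe_ne_coe.mpr h.1)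
      (Subtype.coe_ne_coe.mpr h.2.1) (Subtype.coe_ne_coe.mpr h.2.2) p.2 q.2 r.2 hp hq hr
  · intro x y z w hxy hzx hzy hwx hwy hzxy hwxy
    exact Subtype.ext <| eq_of_adj_iff_adj_of_adj_iff_adj h3 x.2 y.2 z.2 w.2
      (Subtype.coe_ne_coe.mpr hxy) (Subtype.coe_ne_coe.mpr hzx) (Subtype.coe_ne_coe.mpr hzy)
      (Subtype.coe_ne_coe.mpr hwx) (Subtype.coe_ne_coe.mpr hwy) hzxy hwxy

theorem stmt17 [Fintype V] (G : SimpleGraph V) [DecidableRel G.Adj]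
    (hG : G.Connected) (hres : G.resolvingNumber = 3) (v : V)
    (hv : G.degree v = 4) :
    Nonempty ((G.induce (G.neighborSet v)) ≃g pathGraph 4) :=
  stmt17_general G hres v hv
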